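/- Let (X,S) be a minimal subshift and c : A* → ℝ/ℤ a coboundary. Then c extends to a map c : X ∪ A⁺ → ℝ/ℤ satisfying c(x_0) = c(x) − c(Sx) for every x ∈ X (where x_0 is the first letter of x and Sx its shift). -/

import Mathlib

/-!
The sum of `c` along a segment `y₀ … y_{p-1}` of a point `y ∈ X` with `y_p = y₀` vanishes, since
the segment cuts at the successive occurrences of `y₀` into return words. So the Birkhoff sums `S_n`
of `x ↦ c(x₀)` vanish over every periodic orbit of the shift, and any function with this property is
a coboundary: fix a representative `r` of each tail-equivalence class and put
`F x = S_n(x) - S_m(r)` whenever `Sⁿ x = Sᵐ r`; the periodic condition makes this independent of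
`(n, m)`.
-/

/-- The shift map on one-sided infinite words. -/
def shiftN {A : Type*} (x : ℕ → A) : ℕ → A := fun n => x (n + 1)

/-- The factor of `x` of length `l` starting at position `k`. -/
def factorN {A : Type*} (x : ℕ → A) (k l : ℕ) : List A := (List.range l).map (fun i => x (k + i))

/-- The language of a subshift: the set of finite factors of its elements. -/
def languageN {A : Type*} (X : Set (ℕ → A)) : Set (List A) :=
  {w | ∃ x ∈ X, ∃ k, w = factorN x k w.length}

/-- `w` is a return word for the language `L`. -/
def IsReturnWord {A : Type*} [DecidableEq A] (L : Set (List A)) (w : List A) : Prop :=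
  ∃ (a : A) (u : List A), w = a :: u ∧ w ++ [a] ∈ L ∧ w.count a = 1

open Function

section Coboundary

variable {α M : Type*} [AddCommGroup M] {f : α → α} {g : α → M}

theorem Set.MapsTo.birkhoffSum_restrict {s : Set α} (h : Set.MapsTo f s s) (g : α → M) (n : ℕ)
    (x : s) : birkhoffSum (h.restrict f s s) (g ∘ Subtype.val) n x = birkhoffSum f g n x :=
  Finset.sum_congr rfl fun k _ => by rw [comp_apply, h.coe_iterate_restrict]

variable (f) in
def tailSetoid : Setoid α where
  r x y := ∃ n m, f^[n] x = f^[m] y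
  iseqv :=
    { refl := fun _ => ⟨0, 0, rfl⟩
      symm := fun ⟨n, m, h⟩ => ⟨m, n, h.symm⟩
      trans := fun ⟨n, m, h⟩ ⟨n', m', h'⟩ => ⟨n' + n, m + m', by
        rw [iterate_add_apply, h, ← iterate_add_apply, add_comm n' m, iterate_add_apply, h',
          ← iterate_add_apply]⟩ }

theorem birkhoffSum_eq_of_iterate_eq (hper : ∀ x p, IsPeriodicPt f p x → birkhoffSum f g p x = 0)
    {x : α} {n m : ℕ} (h : f^[n] x = f^[m] x) : birkhoffSum f g n x = birkhoffSum f g m x := by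
  wlog hnm : n ≤ m generalizing n m
  · exact (this h.symm (le_of_not_ge hnm)).symm
  obtain ⟨d, rfl⟩ := Nat.exists_eq_add_of_le hnm
  have hd : IsPeriodicPt f d (f^[n] x) := by
    rw [IsPeriodicPt, IsFixedPt, ← iterate_add_apply, add_comm, ← h]
  rw [birkhoffSum_add, hper _ d hd, add_zero]

theorem birkhoffSum_sub_eq_of_iterate_eq
    (hper : ∀ x p, IsPeriodicPt f p x → birkhoffSum f g p x = 0) {x y : α} {n m n' m' : ℕ}
    (h : f^[n] x = f^[m] y) (h' : f^[n'] x = f^[m'] y) :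
    birkhoffSum f g n x - birkhoffSum f g m y = birkhoffSum f g n' x - birkhoffSum f g m' y := by
  have extend : ∀ {n m : ℕ} (k : ℕ), f^[n] x = f^[m] y →
      birkhoffSum f g n x - birkhoffSum f g m y
        = birkhoffSum f g (n + k) x - birkhoffSum f g (m + k) y := by
    intro n m k h
    rw [birkhoffSum_add, birkhoffSum_add, h]
    abel
  have hy : f^[n' + m] y = f^[n + m'] y := by
    rw [iterate_add_apply, ← h, ← iterate_add_apply, add_comm, iterate_add_apply, h',
      ← iterate_add_apply]
  rw [extend n' h, extend n h', add_comm m, add_comm m', birkhoffSum_eq_of_iterate_eq hper hy,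
    add_comm n]

theorem exists_eq_sub_comp_of_birkhoffSum_periodicPt_eq_zero
    (hper : ∀ x p, IsPeriodicPt f p x → birkhoffSum f g p x = 0) :
    ∃ F : α → M, ∀ x, g x = F x - F (f x) := by
  let rep : α → α := fun x => (Quotient.mk (tailSetoid f) x).out
  have rep_comp : ∀ x, rep (f x) = rep x := fun x =>
    congrArg Quotient.out (Quotient.sound ⟨0, 1, rfl⟩)
  have tail_rep : ∀ x, ∃ n m, f^[n] x = f^[m] (rep x) := fun x =>
    (tailSetoid f).iseqv.symm (Quotient.mk_out x)
  choose n m hnm using tail_rep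
  refine ⟨fun x => birkhoffSum f g (n x) x - birkhoffSum f g (m x) (rep x), fun x => ?_⟩
  dsimp only
  have hx : f^[n (f x) + 1] x = f^[m (f x)] (rep x) := by
    rw [iterate_succ_apply, hnm, rep_comp]
  rw [birkhoffSum_sub_eq_of_iterate_eq hper (hnm x) hx, birkhoffSum_succ', rep_comp]
  abel

end Coboundary

section Subshift

variable {A M : Type*}

theorem shiftN_iterate_apply (x : ℕ → A) (n k : ℕ) : shiftN^[n] x k = x (n + k) := by
  induction n generalizing x with
  | zero => simp
  | succ n ih => rw [iterate_succ_apply, ih, shiftN, add_right_comm]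

theorem length_factorN (x : ℕ → A) (k l : ℕ) : (factorN x k l).length = l := by
  simp [factorN]

theorem factorN_succ (x : ℕ → A) (k l : ℕ) :
    factorN x k (l + 1) = factorN x k l ++ [x (k + l)] := by
  simp [factorN, List.range_succ]

theorem factorN_succ' (x : ℕ → A) (k l : ℕ) :
    factorN x k (l + 1) = x k :: factorN x (k + 1) l := by
  simp [factorN, List.range_succ_eq_map, add_assoc, add_comm 1]

theorem mem_factorN {x : ℕ → A} {k l : ℕ} {a : A} :
    a ∈ factorN x k l ↔ ∃ i < l, x (k + i) = a := by
  simp [factorN]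

theorem sum_map_factorN_zero [AddCommMonoid M] (c : A → M) (y : ℕ → A) (k : ℕ) :
    ((factorN y 0 k).map c).sum = birkhoffSum shiftN (fun z => c (z 0)) k y := by
  induction k with
  | zero => simp [factorN]
  | succ k ih => simp [factorN_succ, ih, birkhoffSum_succ, shiftN_iterate_apply]

variable [DecidableEq A] {X : Set (ℕ → A)}

theorem isReturnWord_factorN {y : ℕ → A} (hy : y ∈ X) {k : ℕ} (hk : 0 < k) (hyk : y k = y 0)
    (hfirst : ∀ j, 0 < j → j < k → y j ≠ y 0) : IsReturnWord (languageN X) (factorN y 0 k) := by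
  obtain ⟨k, rfl⟩ := Nat.exists_eq_add_one_of_ne_zero hk.ne'
  refine ⟨y 0, factorN y 1 k, factorN_succ' y 0 k, ⟨y, hy, 0, ?_⟩, ?_⟩
  · rw [List.length_append, length_factorN, List.length_singleton, factorN_succ y 0 (k + 1),
      zero_add, hyk]
  · rw [factorN_succ', List.count_cons_self, List.count_eq_zero.mpr, zero_add]
    intro hmem
    obtain ⟨i, hi, hyi⟩ := mem_factorN.mp hmem
    exact hfirst (1 + i) (by omega) (by omega) hyi

theorem birkhoffSum_shiftN_eq_zero_of_apply_eq [AddCommMonoid M] (hX : Set.MapsTo shiftN X X)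
    {c : A → M} (hc : ∀ w, IsReturnWord (languageN X) w → (w.map c).sum = 0) (p : ℕ) :
    ∀ y ∈ X, y p = y 0 → birkhoffSum shiftN (fun z => c (z 0)) p y = 0 := by
  induction p using Nat.strong_induction_on with
  | _ p ih =>
  intro y hy hp
  rcases p.eq_zero_or_pos with rfl | hpos
  · exact birkhoffSum_zero _ _ _
  have hex : ∃ k, 0 < k ∧ y k = y 0 := ⟨p, hpos, hp⟩
  obtain ⟨k, ⟨hk, hyk⟩, hfirst⟩ : ∃ k, (0 < k ∧ y k = y 0) ∧ ∀ j < k, ¬(0 < j ∧ y j = y 0) :=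
    ⟨Nat.find hex, Nat.find_spec hex, fun _ => Nat.find_min hex⟩
  obtain ⟨d, rfl⟩ : ∃ d, p = k + d :=
    Nat.exists_eq_add_of_le (not_lt.mp fun hpk => hfirst p hpk ⟨hpos, hp⟩)
  have hret := isReturnWord_factorN hy hk hyk fun j hj hjk hyj => hfirst j hjk ⟨hj, hyj⟩
  rw [birkhoffSum_add, ← sum_map_factorN_zero, hc _ hret, zero_add]
  refine ih d (by omega) _ (hX.iterate k hy) ?_
  rw [shiftN_iterate_apply, shiftN_iterate_apply, add_zero, hp, hyk]

end Subshift

theorem coboundary_extends_to_subshift_general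
    {A : Type*} [DecidableEq A]
    (X : Set (ℕ → A))
    (hinv : ∀ x ∈ X, shiftN x ∈ X)
    (c : A → AddCircle (1 : ℝ))
    (hc : ∀ w, IsReturnWord (languageN X) w → (w.map c).sum = 0) :
    ∃ F : X → AddCircle (1 : ℝ),
      ∀ x : X, c (x.val 0) = F x - F ⟨shiftN x.val, hinv x.val x.2⟩ := by
  have hX : Set.MapsTo shiftN X X := hinv
  refine exists_eq_sub_comp_of_birkhoffSum_periodicPt_eq_zero (f := hX.restrict shiftN X X)
    (g := (fun z => c (z 0)) ∘ Subtype.val) fun x p hx => ?_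
  have hxp : x.1 p = x.1 0 := by
    simpa [hX.coe_iterate_restrict, shiftN_iterate_apply] using
      congrFun (congrArg Subtype.val hx) 0
  rw [hX.birkhoffSum_restrict]
  exact birkhoffSum_shiftN_eq_zero_of_apply_eq hX hc p x.1 x.2 hxp

/-- A coboundary `c : A* → ℝ/ℤ` of a minimal subshift (given by its values on letters,
extended additively to words) extends to a map `F` on `X` satisfying
`c(x₀) = F(x) - F(Sx)` for every `x ∈ X`. -/
theorem coboundary_extends_to_subshift
    {A : Type*} [Fintype A] [DecidableEq A]
    [TopologicalSpace A] [DiscreteTopology A]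
    (X : Set (ℕ → A)) (hne : X.Nonempty) (hcl : IsClosed X)
    (hinv : ∀ x ∈ X, shiftN x ∈ X)
    (hmin : ∀ x ∈ X, closure {y | ∃ n : ℕ, y = shiftN^[n] x} = X)
    (c : A → AddCircle (1 : ℝ))
    (hc : ∀ w, IsReturnWord (languageN X) w → (w.map c).sum = 0) :
    ∃ F : X → AddCircle (1 : ℝ),
      ∀ x : X, c (x.val 0) = F x - F ⟨shiftN x.val, hinv x.val x.2⟩ :=
  coboundary_extends_to_subshift_general X hinv c hc
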